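/- arXiv:1905.10882 — 2 statements merged into one kernel-verified Lean document; each statement's English description precedes it below -/
import Mathlib

section
/- Let f, g : (a,b) → ℝ be continuous functions and let (f₀, …, f_N) be a Sturm sequence for f with respect to g on (a,b). If c, d ∈ (a,b) with c < d are not zeros of f, then v(c) − v(d) = #{x ∈ (c,d) : f(x) = 0 ∧ g(x) > 0} − #{x ∈ (c,d) : f(x) = 0 ∧ g(x) < 0}, where v(x) denotes the number of sign variations in the tuple (f₀(x), …, f_N(x)) after removing zeros. -/
/-!
Away from the zeros of `F 0`, the last function does not vanish and every zero of an interior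
`F i` sits between values of opposite signs, so the number of sign variations `v` only depends
on the signs of the nonzero entries and is locally constant. At a zero `z` of `F 0` the tail
`(F 1, …, F N)` still contributes a constant, while the product `F 0 * F 1` passes from the sign
of `-g z` to that of `g z`: `v` drops by one if `g z > 0` and rises by one if `g z < 0`. These
zeros are isolated, hence finite in number on `[c, d]`, and summing the jumps gives the count.
-/

open Set

noncomputable section

/-- Number of sign changes between consecutive entries of a list of reals. -/
def signChanges : List ℝ → ℕ
  | a :: b :: t => (if a * b < 0 then 1 else 0) + signChanges (b :: t)
  | _ => 0

/-- Number of sign variations of a tuple of reals, after removing zero entries. -/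
def signVar (l : List ℝ) : ℕ :=
  signChanges (l.filter (fun x => decide (x ≠ 0)))

/-- `v N F x` is the number of sign variations in `(F 0 x, …, F N x)` after removing zeros. -/
def v (N : ℕ) (F : ℕ → ℝ → ℝ) (x : ℝ) : ℕ :=
  signVar ((List.range (N + 1)).map (fun i => F i x))

/-- `(F 0, …, F N)` is a Sturm sequence in `(a,b)` for `f` with respect to `g`. -/
def SturmSeq (a b : ℝ) (f g : ℝ → ℝ) (N : ℕ) (F : ℕ → ℝ → ℝ) : Prop :=
  (∀ i ≤ N, ContinuousOn (F i) (Ioo a b)) ∧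
  (∀ y ∈ Ioo a b, (F 0 y = 0 ↔ (f y = 0 ∧ g y ≠ 0))) ∧
  (∀ y ∈ Ioo a b, F 0 y = 0 →
    ∃ ε > 0, (∀ x ∈ Ioo (y - ε) (y + ε), F 1 x ≠ 0) ∧
      (g y > 0 →
        (∀ x ∈ Ioo (y - ε) y, F 0 x * F 1 x < 0) ∧
        (∀ x ∈ Ioo y (y + ε), F 0 x * F 1 x > 0)) ∧
      (g y < 0 →
        (∀ x ∈ Ioo (y - ε) y, F 0 x * F 1 x > 0) ∧
        (∀ x ∈ Ioo y (y + ε), F 0 x * F 1 x < 0))) ∧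
  (∀ y ∈ Ioo a b, ∀ i, 1 ≤ i → i ≤ N - 1 → F i y = 0 → F (i - 1) y * F (i + 1) y < 0) ∧
  (∀ y ∈ Ioo a b, F N y ≠ 0)

open Filter Topology
open scoped Finset

lemma signVar_singleton (a : ℝ) : signVar [a] = 0 := by
  by_cases ha : a = 0 <;> simp [signVar, signChanges, ha]

lemma signVar_cons_cons {a b : ℝ} (ha : a ≠ 0) (hb : b ≠ 0) (t : List ℝ) :
    signVar (a :: b :: t) = (if a * b < 0 then 1 else 0) + signVar (b :: t) := by
  simp [signVar, signChanges, ha, hb]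

lemma signVar_cons_cons_cons_of_mul_neg {a c : ℝ} (b : ℝ) (hac : a * c < 0) (t : List ℝ) :
    signVar (a :: b :: c :: t) = 1 + signVar (c :: t) := by
  have ha : a ≠ 0 := left_ne_zero_of_mul hac.ne
  have hc : c ≠ 0 := right_ne_zero_of_mul hac.ne
  by_cases hb : b = 0
  · simp [signVar, signChanges, ha, hb, hc, hac]
  have hprod : (a * b) * (b * c) < 0 := by
    rw [show (a * b) * (b * c) = b ^ 2 * (a * c) by ring]
    exact mul_neg_of_pos_of_neg (by positivity) hac
  rw [signVar_cons_cons ha hb, signVar_cons_cons hb hc]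
  split_ifs with h₁ h₂ h₂
  · exact absurd hprod (mul_pos_of_neg_of_neg h₁ h₂).not_gt
  · omega
  · omega
  · exact absurd hprod (mul_nonneg (not_lt.1 h₁) (not_lt.1 h₂)).not_gt

lemma map_range_succ {α : Type*} (s : ℕ → α) (n : ℕ) :
    (List.range (n + 1)).map s = s 0 :: (List.range n).map (fun i => s (i + 1)) := by
  simp [List.range_succ_eq_map, Function.comp_def]

lemma signVar_map_range_of_ne_zero {s : ℕ → ℝ} (n : ℕ) (h0 : s 0 ≠ 0) (h1 : s 1 ≠ 0) :
    signVar ((List.range (n + 2)).map s) =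
      (if s 0 * s 1 < 0 then 1 else 0) +
        signVar ((List.range (n + 1)).map (fun i => s (i + 1))) := by
  rw [map_range_succ, map_range_succ (fun i => s (i + 1))]
  exact signVar_cons_cons h0 h1 _

lemma signVar_map_range_of_mul_neg {s : ℕ → ℝ} (n : ℕ) (h02 : s 0 * s 2 < 0) :
    signVar ((List.range (n + 3)).map s) =
      1 + signVar ((List.range (n + 1)).map (fun i => s (i + 2))) := by
  rw [map_range_succ, map_range_succ (fun i => s (i + 1)),
    map_range_succ (fun i => s (i + 1 + 1))]
  exact signVar_cons_cons_cons_of_mul_neg _ h02 _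

lemma mul_neg_iff_of_mul_pos {a b a' b' : ℝ} (ha : 0 < a * a') (hb : 0 < b * b') :
    a * b < 0 ↔ a' * b' < 0 := by
  have h : 0 < (a * b) * (a' * b') := by
    rw [show (a * b) * (a' * b') = (a * a') * (b * b') by ring]; exact mul_pos ha hb
  constructor <;> intro h' <;> nlinarith

theorem signVar_map_range_eq_of_sign_agree {N : ℕ} {s s' : ℕ → ℝ} (h0 : s 0 ≠ 0)
    (hN : s N ≠ 0)
    (hzero : ∀ i, i + 1 < N → s (i + 1) = 0 → s i * s (i + 2) < 0)
    (hsign : ∀ i ≤ N, s i ≠ 0 → 0 < s i * s' i) :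
    signVar ((List.range (N + 1)).map s) = signVar ((List.range (N + 1)).map s') := by
  induction N using Nat.strong_induction_on generalizing s s' with
  | _ N ih =>
  match N with
  | 0 => simp [signVar_singleton]
  | M + 1 =>
    by_cases h1 : s 1 = 0
    · obtain ⟨K, rfl⟩ : ∃ K, M = K + 1 :=
        Nat.exists_eq_succ_of_ne_zero (by rintro rfl; exact hN h1)
      have h02 : s 0 * s 2 < 0 := hzero 0 (by omega) h1
      have h02' : s' 0 * s' 2 < 0 := by
        rwa [← mul_neg_iff_of_mul_pos (hsign 0 (by omega) h0)
          (hsign 2 (by omega) (right_ne_zero_of_mul h02.ne))]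
      rw [signVar_map_range_of_mul_neg K h02, signVar_map_range_of_mul_neg K h02',
        ih K (by omega) (right_ne_zero_of_mul h02.ne) hN
          (fun i hi hsi => hzero (i + 2) (by omega) hsi)
          (fun i hi hsi => hsign (i + 2) (by omega) hsi)]
    · have h0' := hsign 0 (by omega) h0
      have h1' := hsign 1 (by omega) h1
      rw [signVar_map_range_of_ne_zero M h0 h1, signVar_map_range_of_ne_zero M
          (right_ne_zero_of_mul h0'.ne') (right_ne_zero_of_mul h1'.ne'),
        ih M (by omega) h1 hN (fun i hi hsi => hzero (i + 1) (by omega) hsi)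
          (fun i hi hsi => hsign (i + 1) (by omega) hsi)]
      simp only [mul_neg_iff_of_mul_pos h0' h1']

lemma eq_of_eventually_eq_on_Icc {α : Type*} {h : ℝ → α} {c d : ℝ} (hcd : c ≤ d)
    (hconst : ∀ x ∈ Icc c d, ∀ᶠ y in 𝓝 x, h y = h x) : h c = h d := by
  let : TopologicalSpace α := ⊥
  have : DiscreteTopology α := ⟨rfl⟩
  exact isPreconnected_Icc.constant
    (fun x hx =>
      (continuousAt_const.congr ((hconst x hx).mono fun _ hy => hy.symm)).continuousWithinAt)
    (left_mem_Icc.2 hcd) (right_mem_Icc.2 hcd)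

theorem sub_eq_sum_of_eventually_eq {G : Type*} [AddCommGroup G] {h J : ℝ → G} {c : ℝ}
    (Z : Finset ℝ) (d : ℝ) (hcd : c ≤ d) (hZ : ∀ z ∈ Z, z ∈ Ioo c d)
    (hconst : ∀ x ∈ Icc c d, x ∉ Z → ∀ᶠ y in 𝓝 x, h y = h x)
    (hjump : ∀ z ∈ Z, ∀ᶠ u in 𝓝[<] z, ∀ᶠ w in 𝓝[>] z, h u - h w = J z) :
    h c - h d = ∑ z ∈ Z, J z := by
  classical
  induction Z using Finset.induction_on_max generalizing d with
  | empty =>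
    rw [eq_of_eventually_eq_on_Icc hcd (fun x hx => hconst x hx (Finset.notMem_empty x)),
      sub_self, Finset.sum_empty]
  | insert z Z hlt ih =>
    have hz := hZ z (Finset.mem_insert_self z Z)
    set m := (insert c Z).max' (Finset.insert_nonempty c Z)
    have hcm : c ≤ m := (insert c Z).le_max' c (Finset.mem_insert_self c Z)
    have hZm : ∀ x ∈ Z, x ≤ m := fun x hx =>
      (insert c Z).le_max' x (Finset.mem_insert_of_mem hx)
    have hmz : m < z := (Finset.max'_lt_iff _ _).2 fun x hx => by
      rcases Finset.mem_insert.1 hx with rfl | hx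
      exacts [hz.1, hlt x hx]
    obtain ⟨u, hjump_u, hu⟩ :=
      ((hjump z (Finset.mem_insert_self z Z)).and (Ioo_mem_nhdsLT hmz)).exists
    obtain ⟨w, hjump_uw, hw⟩ := (hjump_u.and (Ioo_mem_nhdsGT hz.2)).exists
    have hleft : h c - h u = ∑ x ∈ Z, J x :=
      ih u (hcm.trans hu.1.le)
        (fun x hx => ⟨(hZ x (Finset.mem_insert_of_mem hx)).1, (hZm x hx).trans_lt hu.1⟩)
        (fun x hx hxZ => hconst x ⟨hx.1, hx.2.trans (hu.2.trans hz.2).le⟩ (by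
          rw [Finset.mem_insert, not_or]; exact ⟨(hx.2.trans_lt hu.2).ne, hxZ⟩))
        (fun x hx => hjump x (Finset.mem_insert_of_mem hx))
    have hright : h w = h d := eq_of_eventually_eq_on_Icc hw.2.le fun x hx =>
      hconst x ⟨(hcm.trans (hmz.trans hw.1).le).trans hx.1, hx.2⟩ (by
        rw [Finset.mem_insert, not_or]
        exact ⟨(hw.1.trans_le hx.1).ne', fun hxZ => (hlt x hxZ).not_gt (hw.1.trans_le hx.1)⟩)
    rw [Finset.sum_insert (fun hzZ => (hlt z hzZ).false), ← hleft, ← hjump_uw, ← hright]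
    abel

lemma eventually_forall_mul_pos {X : Type*} [TopologicalSpace X] {N : ℕ} {F : ℕ → X → ℝ}
    {x₀ : X} (hF : ∀ i ≤ N, ContinuousAt (F i) x₀) :
    ∀ᶠ x in 𝓝 x₀, ∀ i ≤ N, F i x₀ ≠ 0 → 0 < F i x₀ * F i x := by
  refine (eventually_all_finite (finite_Iic N)).2 fun i hi => ?_
  by_cases h : F i x₀ = 0
  · exact Eventually.of_forall fun _ h' => absurd h h'
  · filter_upwards [(continuousAt_const.mul (hF i hi)).eventually
      (lt_mem_nhds (mul_self_pos.2 h))] with x hx _ using hx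

lemma eventually_v_eq {N : ℕ} {F : ℕ → ℝ → ℝ} {x₀ : ℝ}
    (hF : ∀ i ≤ N, ContinuousAt (F i) x₀) (h0 : F 0 x₀ ≠ 0) (hN : F N x₀ ≠ 0)
    (hzero : ∀ i, i + 1 < N → F (i + 1) x₀ = 0 → F i x₀ * F (i + 2) x₀ < 0) :
    ∀ᶠ x in 𝓝 x₀, v N F x = v N F x₀ := by
  filter_upwards [eventually_forall_mul_pos hF] with x hx
  exact (signVar_map_range_eq_of_sign_agree h0 hN hzero hx).symm

lemma eventually_v_succ_eq {M : ℕ} {F : ℕ → ℝ → ℝ} {z : ℝ}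
    (hF : ∀ i ≤ M + 1, ContinuousAt (F i) z) (h1 : F 1 z ≠ 0) (hN : F (M + 1) z ≠ 0)
    (hzero : ∀ i, i + 2 < M + 1 → F (i + 2) z = 0 → F (i + 1) z * F (i + 3) z < 0) :
    ∀ᶠ x in 𝓝 z, F 0 x ≠ 0 →
      v (M + 1) F x = (if F 0 x * F 1 x < 0 then 1 else 0) + v M (fun i => F (i + 1)) z := by
  filter_upwards [eventually_v_eq (F := fun i => F (i + 1)) (fun i hi => hF (i + 1) (by omega))
      h1 hN (fun i hi => hzero i (by omega)), (hF 1 (by omega)).eventually_ne h1]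
    with x hx hx1 hx0
  rw [v, signVar_map_range_of_ne_zero M hx0 hx1, ← hx]
  rfl

lemma ite_sub_ite_eq_of_mul_neg_of_mul_pos {p q r : ℝ} (hp : p * r < 0) (hq : 0 < q * r) :
    ((if p < 0 then 1 else 0 : ℕ) : ℤ) - ((if q < 0 then 1 else 0 : ℕ) : ℤ) =
      if 0 < r then 1 else -1 := by
  split_ifs <;> first | rfl | nlinarith

lemma sum_ite_pos_eq_card_sub_card {ι : Type*} (Z : Finset ι) {r : ι → ℝ}
    (hr : ∀ z ∈ Z, r z ≠ 0) :
    ∑ z ∈ Z, (if 0 < r z then (1 : ℤ) else -1) =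
      #{z ∈ Z | 0 < r z} - #{z ∈ Z | r z < 0} := by
  rw [Finset.sum_ite, Finset.sum_const, Finset.sum_const,
    Finset.filter_congr fun z hz => not_lt.trans (hr z hz).le_iff_lt]
  simp [sub_eq_add_neg]

namespace SturmSeq

variable {a b : ℝ} {f g : ℝ → ℝ} {N : ℕ} {F : ℕ → ℝ → ℝ}

lemma continuousAt (hS : SturmSeq a b f g N F) {y : ℝ} (hy : y ∈ Ioo a b) :
    ∀ i ≤ N, ContinuousAt (F i) y :=
  fun i hi => (hS.1 i hi).continuousAt (isOpen_Ioo.mem_nhds hy)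

lemma apply_zero_ne_zero (hS : SturmSeq a b f g N F) {y : ℝ} (hy : y ∈ Ioo a b)
    (hfy : f y ≠ 0) : F 0 y ≠ 0 :=
  fun h => hfy ((hS.2.1 y hy).1 h).1

lemma mul_neg_of_apply_succ_eq_zero (hS : SturmSeq a b f g N F) {y : ℝ} (hy : y ∈ Ioo a b) :
    ∀ i, i + 1 < N → F (i + 1) y = 0 → F i y * F (i + 2) y < 0 :=
  fun i hi h => hS.2.2.2.1 y hy (i + 1) (by omega) (by omega) h

lemma eventually_v_eq (hS : SturmSeq a b f g N F) {y : ℝ} (hy : y ∈ Ioo a b)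
    (h0 : F 0 y ≠ 0) : ∀ᶠ x in 𝓝 y, v N F x = v N F y :=
  _root_.eventually_v_eq (hS.continuousAt hy) h0 (hS.2.2.2.2 y hy)
    (hS.mul_neg_of_apply_succ_eq_zero hy)

lemma apply_one_ne_zero (hS : SturmSeq a b f g N F) {z : ℝ} (hz : z ∈ Ioo a b)
    (h0 : F 0 z = 0) : F 1 z ≠ 0 := by
  obtain ⟨ε, hε, hF1, -⟩ := hS.2.2.1 z hz h0
  exact hF1 z ⟨by linarith, by linarith⟩

lemma eventually_mul_mul_neg_and_pos (hS : SturmSeq a b f g N F) {z : ℝ} (hz : z ∈ Ioo a b)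
    (h0 : F 0 z = 0) :
    (∀ᶠ x in 𝓝[<] z, F 0 x * F 1 x * g z < 0) ∧
      (∀ᶠ x in 𝓝[>] z, 0 < F 0 x * F 1 x * g z) := by
  obtain ⟨ε, hε, -, hpos, hneg⟩ := hS.2.2.1 z hz h0
  have hleft : Ioo (z - ε) z ∈ 𝓝[<] z := Ioo_mem_nhdsLT (by linarith)
  have hright : Ioo z (z + ε) ∈ 𝓝[>] z := Ioo_mem_nhdsGT (by linarith)
  rcases ((hS.2.1 z hz).1 h0).2.lt_or_gt with hg | hg
  · exact ⟨mem_of_superset hleft fun x hx => mul_neg_of_pos_of_neg ((hneg hg).1 x hx) hg,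
      mem_of_superset hright fun x hx => mul_pos_of_neg_of_neg ((hneg hg).2 x hx) hg⟩
  · exact ⟨mem_of_superset hleft fun x hx => mul_neg_of_neg_of_pos ((hpos hg).1 x hx) hg,
      mem_of_superset hright fun x hx => mul_pos ((hpos hg).2 x hx) hg⟩

lemma eventually_ne_zero (hS : SturmSeq a b f g N F) {z : ℝ} (hz : z ∈ Ioo a b)
    (h0 : F 0 z = 0) : ∀ᶠ x in 𝓝[≠] z, F 0 x ≠ 0 := by
  obtain ⟨hleft, hright⟩ := hS.eventually_mul_mul_neg_and_pos hz h0
  rw [← nhdsLT_sup_nhdsGT, eventually_sup]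
  exact ⟨hleft.mono fun x hx h => by simp [h] at hx,
    hright.mono fun x hx h => by simp [h] at hx⟩

-- Near `z` only the pair `(F 0, F 1)` changes its contribution to the sign variation.
lemma eventually_v_sub_v (hS : SturmSeq a b f g N F) {z : ℝ} (hz : z ∈ Ioo a b)
    (h0 : F 0 z = 0) :
    ∀ᶠ u in 𝓝[<] z, ∀ᶠ w in 𝓝[>] z,
      (v N F u : ℤ) - v N F w = if 0 < g z then 1 else -1 := by
  obtain ⟨M, rfl⟩ : ∃ M, N = M + 1 :=
    Nat.exists_eq_succ_of_ne_zero (by rintro rfl; exact hS.2.2.2.2 z hz h0)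
  have hv := eventually_v_succ_eq (hS.continuousAt hz) (hS.apply_one_ne_zero hz h0)
    (hS.2.2.2.2 z hz) (fun i hi => hS.mul_neg_of_apply_succ_eq_zero hz (i + 1) (by omega))
  obtain ⟨hleft, hright⟩ := hS.eventually_mul_mul_neg_and_pos hz h0
  filter_upwards [hleft, hv.filter_mono nhdsWithin_le_nhds] with u hu hvu
  filter_upwards [hright, hv.filter_mono nhdsWithin_le_nhds] with w hw hvw
  rw [hvu (left_ne_zero_of_mul (left_ne_zero_of_mul hu.ne)),
    hvw (left_ne_zero_of_mul (left_ne_zero_of_mul hw.ne')), Nat.cast_add, Nat.cast_add,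
    add_sub_add_right_eq_sub]
  exact ite_sub_ite_eq_of_mul_neg_of_mul_pos hu hw

lemma finite_zeros (hS : SturmSeq a b f g N F) {c d : ℝ} (hcd : Icc c d ⊆ Ioo a b) :
    {x ∈ Icc c d | F 0 x = 0}.Finite := by
  refine IsCompact.finite ?_ (isDiscrete_iff_nhdsNE.2 fun z hz => inf_principal_eq_bot.2 ?_)
  · exact isCompact_Icc.of_isClosed_subset
      (((hS.1 0 N.zero_le).mono hcd).preimage_isClosed_of_isClosed isClosed_Icc isClosed_singleton)
      fun x hx => hx.1
  · filter_upwards [hS.eventually_ne_zero (hcd hz.1) hz.2] with x hx hxZ using hx hxZ.2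

lemma ncard_setOf_eq_card_filter (hS : SturmSeq a b f g N F) {s : Set ℝ} (hs : s ⊆ Ioo a b)
    (hfin : {x ∈ s | F 0 x = 0}.Finite)
    {p : ℝ → Prop} [DecidablePred p] (hp : ∀ x, p x → g x ≠ 0) :
    {x ∈ s | f x = 0 ∧ p x}.ncard = #{x ∈ hfin.toFinset | p x} := by
  rw [← Set.ncard_coe_finset, Finset.coe_filter]
  congr 1
  ext x
  rw [mem_ofPred_eq, mem_ofPred_eq, hfin.mem_toFinset]
  constructor
  · rintro ⟨hx, hfx, hpx⟩
    exact ⟨⟨hx, (hS.2.1 x (hs hx)).2 ⟨hfx, hp x hpx⟩⟩, hpx⟩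
  · rintro ⟨⟨hx, h0⟩, hpx⟩
    exact ⟨hx, ((hS.2.1 x (hs hx)).1 h0).1, hpx⟩

end SturmSeq

theorem sturm_variation_count_general {a b : ℝ} {N : ℕ} {f g : ℝ → ℝ} {F : ℕ → ℝ → ℝ}
    (hSturm : SturmSeq a b f g N F)
    {c d : ℝ} (hc : c ∈ Ioo a b) (hd : d ∈ Ioo a b) (hcd : c < d)
    (hfc : f c ≠ 0) (hfd : f d ≠ 0) :
    (v N F c : ℤ) - v N F d =
      ({x ∈ Ioo c d | f x = 0 ∧ g x > 0}.ncard : ℤ) -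
        ({x ∈ Ioo c d | f x = 0 ∧ g x < 0}.ncard : ℤ) := by
  have hsub : Icc c d ⊆ Ioo a b := Icc_subset_Ioo hc.1 hd.2
  have hfin : {x ∈ Ioo c d | F 0 x = 0}.Finite :=
    (hSturm.finite_zeros hsub).subset fun x hx => ⟨Ioo_subset_Icc_self hx.1, hx.2⟩
  have hZ : ∀ z ∈ hfin.toFinset, z ∈ Ioo a b ∧ F 0 z = 0 := fun z hz =>
    ⟨hsub (Ioo_subset_Icc_self (hfin.mem_toFinset.1 hz).1), (hfin.mem_toFinset.1 hz).2⟩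
  have hne_zero (x : ℝ) (hx : x ∈ Icc c d) (hxZ : x ∉ hfin.toFinset) : F 0 x ≠ 0 := by
    rcases hx.1.eq_or_lt with rfl | hcx
    · exact hSturm.apply_zero_ne_zero hc hfc
    rcases hx.2.eq_or_lt with rfl | hxd
    · exact hSturm.apply_zero_ne_zero hd hfd
    exact fun h => hxZ (hfin.mem_toFinset.2 ⟨⟨hcx, hxd⟩, h⟩)
  rw [sub_eq_sum_of_eventually_eq (h := fun x => (v N F x : ℤ)) hfin.toFinset d hcd.le
      (fun z hz => (hfin.mem_toFinset.1 hz).1)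
      (fun x hx hxZ => (hSturm.eventually_v_eq (hsub hx) (hne_zero x hx hxZ)).mono
        fun y hy => congrArg Nat.cast hy)
      (fun z hz => hSturm.eventually_v_sub_v (hZ z hz).1 (hZ z hz).2),
    sum_ite_pos_eq_card_sub_card _ fun z hz => ((hSturm.2.1 z (hZ z hz).1).1 (hZ z hz).2).2,
    hSturm.ncard_setOf_eq_card_filter (hsub.trans' Ioo_subset_Icc_self) hfin fun x hx => hx.ne',
    hSturm.ncard_setOf_eq_card_filter (hsub.trans' Ioo_subset_Icc_self) hfin fun x hx => hx.ne]

theorem sturm_variation_count {a b : ℝ} {N : ℕ} {f g : ℝ → ℝ} {F : ℕ → ℝ → ℝ}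
    (hf : ContinuousOn f (Ioo a b)) (hg : ContinuousOn g (Ioo a b))
    (hSturm : SturmSeq a b f g N F)
    {c d : ℝ} (hc : c ∈ Ioo a b) (hd : d ∈ Ioo a b) (hcd : c < d)
    (hfc : f c ≠ 0) (hfd : f d ≠ 0) :
    (v N F c : ℤ) - v N F d =
      ({x ∈ Ioo c d | f x = 0 ∧ g x > 0}.ncard : ℤ) -
        ({x ∈ Ioo c d | f x = 0 ∧ g x < 0}.ncard : ℤ) :=
  sturm_variation_count_general hSturm hc hd hcd hfc hfd

end
end

section
/- Let f₁, …, f_s be a family of E-polynomials (functions of the form F(x, e^{h(x)}) with F ∈ ℤ[X,Y], h ∈ ℤ[X]) closed under pseudo-derivation, and let ε : {1,…,s} → {−1,0,1}. Then the set A_ε = {x ∈ ℝ : sign(f_i(x)) = ε(i) for all 1 ≤ i ≤ s} is either empty, a single point, or an open interval. -/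
noncomputable section

/-- Evaluation of a bivariate integer polynomial (a polynomial in `Y` with coefficients
in `ℤ[X]`) at `(x, y) ∈ ℝ²`. -/
def ev (P : Polynomial (Polynomial ℤ)) (x y : ℝ) : ℝ :=
  Polynomial.eval₂ (Polynomial.eval₂RingHom (Int.castRingHom ℝ) x) y P

/-- The E-polynomial `x ↦ F(x, e^{h(x)})`. -/
def epoly (h : Polynomial ℤ) (F : Polynomial (Polynomial ℤ)) (x : ℝ) : ℝ :=
  ev F x (Real.exp (Polynomial.eval₂ (Int.castRingHom ℝ) x h))

/-- Partial derivative with respect to `X` (the inner variable). -/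
def dX (P : Polynomial (Polynomial ℤ)) : Polynomial (Polynomial ℤ) :=
  P.sum fun n c => Polynomial.C (Polynomial.derivative c) * Polynomial.X ^ n

/-- The polynomial `F̃ = ∂F/∂X + (∂F/∂Y)·h'(X)·Y` defining the derivative of the
E-polynomial `x ↦ F(x, e^{h(x)})`. -/
def FtildeE (h : Polynomial ℤ) (F : Polynomial (Polynomial ℤ)) : Polynomial (Polynomial ℤ) :=
  dX F + Polynomial.derivative F * (Polynomial.C (Polynomial.derivative h) * Polynomial.X)

/-- The pseudo-derivative at the level of defining polynomials: it is `F̃` when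
`deg_X F(X,0) > 0`; when `F(X,0)` is constant and `F̃ ≠ 0` it is `F̃` divided by the
largest power `Y^k` dividing it; and it is `0` when `F̃ = 0`. -/
def pderPoly (h : Polynomial ℤ) (F : Polynomial (Polynomial ℤ)) : Polynomial (Polynomial ℤ) :=
  let Ft := FtildeE h F
  if Ft = 0 then 0
  else if 0 < (F.coeff 0).natDegree then Ft
  else Polynomial.divX^[Ft.natTrailingDegree] Ft

/-! Order the defining polynomials by `(deg_Y F, deg_X F(X,0))` lexicographically; whenever
`f' ≠ 0`, pseudo-derivation strictly lowers this pair, and `pder f` has the sign of `f'`. So by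
well-founded induction, if every `f_i` has the same sign at `a ≤ b`, then the sign of each `f_i'`
is constant on `[a, b]`, each `f_i` is monotone there, and its sign is constant on `[a, b]`: the
set `A_ε` is order-connected. If it contains two points, each `f_i` with `ε i = 0` vanishes on an
interval, hence everywhere by analyticity, and the remaining conditions `sign f_i = ±1` are open. -/

open Polynomial Set Filter Topology

namespace Polynomial

variable {R : Type*} [Semiring R]

theorem X_pow_mul_divX_iterate {t : ℕ} {p : R[X]} (hp : ∀ k < t, p.coeff k = 0) :
    X ^ t * divX^[t] p = p := by
  induction t generalizing p with
  | zero => simp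
  | succ t ih =>
    rw [Function.iterate_succ_apply, pow_succ', mul_assoc,
      ih fun k hk => by rw [coeff_divX]; exact hp _ (by omega)]
    simpa [hp 0 t.succ_pos] using X_mul_divX_add p

theorem X_pow_natTrailingDegree_mul_divX_iterate (p : R[X]) :
    X ^ p.natTrailingDegree * divX^[p.natTrailingDegree] p = p :=
  X_pow_mul_divX_iterate fun _ hk => coeff_eq_zero_of_lt_natTrailingDegree hk

end Polynomial

theorem Real.sign_monotone : Monotone Real.sign := by
  intro a b hab
  simp only [Real.sign]
  split_ifs <;> linarith

theorem Real.sign_mul_of_pos {a : ℝ} (ha : 0 < a) (b : ℝ) : Real.sign (a * b) = Real.sign b := by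
  rcases lt_trichotomy b 0 with hb | rfl | hb
  · rw [Real.sign_of_neg hb, Real.sign_of_neg (mul_neg_of_pos_of_neg ha hb)]
  · rw [mul_zero]
  · rw [Real.sign_of_pos hb, Real.sign_of_pos (mul_pos ha hb)]

theorem Real.sign_eq_of_monotoneOn_or_antitoneOn {α : Type*} [Preorder α] {f : α → ℝ} {a b x : α}
    (hf : MonotoneOn f (Icc a b) ∨ AntitoneOn f (Icc a b))
    (hab : Real.sign (f a) = Real.sign (f b)) (hx : x ∈ Icc a b) :
    Real.sign (f x) = Real.sign (f a) := by
  have ha : a ∈ Icc a b := left_mem_Icc.2 (hx.1.trans hx.2)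
  have hb : b ∈ Icc a b := right_mem_Icc.2 (hx.1.trans hx.2)
  rcases hf with hf | hf
  · exact le_antisymm (hab ▸ Real.sign_monotone (hf hx hb hx.2))
      (Real.sign_monotone (hf ha hx hx.1))
  · exact le_antisymm (Real.sign_monotone (hf ha hx hx.1))
      (hab ▸ Real.sign_monotone (hf hx hb hx.2))

theorem monotoneOn_or_antitoneOn_of_sign_deriv_eq {f f' : ℝ → ℝ} {s : Set ℝ} (hs : Convex ℝ s)
    (hf : ∀ x, HasDerivAt f (f' x) x) {σ : ℝ} (hσ : ∀ x ∈ interior s, Real.sign (f' x) = σ) :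
    MonotoneOn f s ∨ AntitoneOn f s := by
  have hcont : ContinuousOn f s := fun x _ => (hf x).continuousAt.continuousWithinAt
  have hdiff : DifferentiableOn ℝ f (interior s) :=
    fun x _ => (hf x).differentiableAt.differentiableWithinAt
  rcases le_total 0 σ with h0 | h0
  · refine Or.inl (monotoneOn_of_deriv_nonneg hs hcont hdiff fun x hx => ?_)
    rw [(hf x).deriv]
    by_contra! hneg
    linarith [hσ x hx ▸ Real.sign_of_neg hneg]
  · refine Or.inr (antitoneOn_of_deriv_nonpos hs hcont hdiff fun x hx => ?_)
    rw [(hf x).deriv]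
    by_contra! hpos
    linarith [hσ x hx ▸ Real.sign_of_pos hpos]

theorem eq_zero_of_eqOn_Icc_zero {E : Type*} [NormedAddCommGroup E] [NormedSpace ℝ E] {f : ℝ → E}
    (hf : ∀ x, AnalyticAt ℝ f x) {a b : ℝ} (hab : a < b) (h0 : EqOn f 0 (Icc a b)) : f = 0 := by
  have hmid : Icc a b ∈ 𝓝 ((a + b) / 2) := Icc_mem_nhds (by linarith) (by linarith)
  funext x
  exact AnalyticOnNhd.eqOn_zero_of_preconnected_of_eventuallyEq_zero (fun x _ => hf x)
    isPreconnected_univ (mem_univ _) (Filter.mem_of_superset hmid h0) (mem_univ x)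

theorem isOpen_setOf_sign_eq {X : Type*} [TopologicalSpace X] {f : X → ℝ} (hf : Continuous f)
    {σ : ℝ} (hσ : σ ≠ 0) : IsOpen {x | Real.sign (f x) = σ} := by
  rw [isOpen_iff_mem_nhds]
  intro x hx
  rcases lt_trichotomy (f x) 0 with hneg | hzero | hpos
  · filter_upwards [hf.continuousAt.eventually_lt continuousAt_const hneg] with y hy
    rw [Real.sign_of_neg hy, ← Real.sign_of_neg hneg]; exact hx
  · exact absurd (hzero ▸ hx : Real.sign 0 = σ) (by rw [Real.sign_zero]; exact hσ.symm)
  · filter_upwards [continuousAt_const.eventually_lt hf.continuousAt hpos] with y hy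
    rw [Real.sign_of_pos hy, ← Real.sign_of_pos hpos]; exact hx

section EPolynomial

variable (h : ℤ[X])

@[simp] theorem epoly_add (P Q : ℤ[X][X]) (x : ℝ) :
    epoly h (P + Q) x = epoly h P x + epoly h Q x := by
  simp [epoly, ev]

@[simp] theorem epoly_mul (P Q : ℤ[X][X]) (x : ℝ) :
    epoly h (P * Q) x = epoly h P x * epoly h Q x := by
  simp [epoly, ev]

@[simp] theorem epoly_zero (x : ℝ) : epoly h 0 x = 0 := by
  simp [epoly, ev]

@[simp] theorem epoly_one (x : ℝ) : epoly h 1 x = 1 := by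
  simp [epoly, ev]

@[simp] theorem epoly_natCast (n : ℕ) (x : ℝ) : epoly h n x = n := by
  simp [epoly, ev]

@[simp] theorem epoly_C (a : ℤ[X]) (x : ℝ) : epoly h (C a) x = a.eval₂ (Int.castRingHom ℝ) x := by
  simp [epoly, ev]

@[simp] theorem epoly_X (x : ℝ) : epoly h X x = Real.exp (h.eval₂ (Int.castRingHom ℝ) x) := by
  simp [epoly, ev]

@[simp] theorem epoly_X_pow (n : ℕ) (x : ℝ) :
    epoly h (X ^ n) x = Real.exp (h.eval₂ (Int.castRingHom ℝ) x) ^ n := by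
  simp [epoly, ev]

theorem epoly_monomial (n : ℕ) (a : ℤ[X]) :
    epoly h (monomial n a) =
      fun x => a.eval₂ (Int.castRingHom ℝ) x * Real.exp (h.eval₂ (Int.castRingHom ℝ) x) ^ n := by
  ext x
  rw [← C_mul_X_pow_eq_monomial, epoly_mul, epoly_C, epoly_X_pow]

theorem hasDerivAt_eval₂_intCast (p : ℤ[X]) (x : ℝ) :
    HasDerivAt (fun y => p.eval₂ (Int.castRingHom ℝ) y)
      ((derivative p).eval₂ (Int.castRingHom ℝ) x) x := by
  simp only [eval₂_eq_eval_map, ← derivative_map]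
  exact Polynomial.hasDerivAt _ x

theorem analyticAt_eval₂_intCast (p : ℤ[X]) (x : ℝ) :
    AnalyticAt ℝ (fun y => p.eval₂ (Int.castRingHom ℝ) y) x := by
  simp only [eval₂_eq_eval_map]
  exact AnalyticAt.aeval_polynomial analyticAt_id (p.map _)

theorem dX_add (P Q : ℤ[X][X]) : dX (P + Q) = dX P + dX Q :=
  sum_add_index _ _ _ (by simp) (by simp [add_mul])

theorem dX_monomial (n : ℕ) (a : ℤ[X]) : dX (monomial n a) = C (derivative a) * X ^ n := by
  simp [dX, sum_monomial_index]

theorem FtildeE_add (P Q : ℤ[X][X]) : FtildeE h (P + Q) = FtildeE h P + FtildeE h Q := by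
  simp only [FtildeE, dX_add, derivative_add, add_mul]
  ring

theorem hasDerivAt_epoly (F : ℤ[X][X]) (x : ℝ) :
    HasDerivAt (epoly h F) (epoly h (FtildeE h F) x) x := by
  induction F using Polynomial.induction_on' with
  | add P Q hP hQ =>
    rw [FtildeE_add, epoly_add]
    exact (hP.add hQ).congr_of_eventuallyEq (.of_forall fun y => epoly_add h P Q y)
  | monomial n a =>
    rw [epoly_monomial]
    refine ((hasDerivAt_eval₂_intCast a x).fun_mul
      ((hasDerivAt_eval₂_intCast h x).exp.fun_pow n)).congr_deriv ?_
    simp only [FtildeE]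
    rw [dX_monomial, derivative_monomial, ← C_mul_X_pow_eq_monomial]
    cases n with
    | zero => simp
    | succ n => simp; ring

theorem analyticAt_epoly (F : ℤ[X][X]) (x : ℝ) : AnalyticAt ℝ (epoly h F) x := by
  induction F using Polynomial.induction_on' with
  | add P Q hP hQ => exact (hP.add hQ).congr (.of_forall fun y => (epoly_add h P Q y).symm)
  | monomial n a =>
    rw [epoly_monomial]
    exact (analyticAt_eval₂_intCast a x).mul
      ((analyticAt_rexp.comp (analyticAt_eval₂_intCast h x)).pow n)

theorem continuous_epoly (F : ℤ[X][X]) : Continuous (epoly h F) :=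
  continuous_iff_continuousAt.2 fun x => (hasDerivAt_epoly h F x).continuousAt

end EPolynomial

section PseudoDerivative

variable (h : ℤ[X]) (F : ℤ[X][X])

theorem coeff_dX (n : ℕ) : (dX F).coeff n = derivative (F.coeff n) := by
  induction F using Polynomial.induction_on' with
  | add P Q hP hQ => rw [dX_add, coeff_add, hP, hQ, coeff_add, derivative_add]
  | monomial k a =>
    rw [dX_monomial, coeff_C_mul_X_pow, coeff_monomial]
    split_ifs <;> simp_all

theorem coeff_zero_FtildeE : (FtildeE h F).coeff 0 = derivative (F.coeff 0) := by
  simp [FtildeE, coeff_dX]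

theorem natDegree_FtildeE_le : (FtildeE h F).natDegree ≤ F.natDegree := by
  refine (natDegree_add_le _ _).trans (max_le ?_ ?_)
  · exact natDegree_le_iff_coeff_eq_zero.2 fun N hN => by
      rw [coeff_dX, coeff_eq_zero_of_natDegree_lt hN, derivative_zero]
  · rcases eq_or_ne F.natDegree 0 with h0 | h0
    · rw [eq_C_of_natDegree_eq_zero h0]
      simp
    · have hF' := natDegree_derivative_le F
      have hX : (C (derivative h) * X : ℤ[X][X]).natDegree ≤ 1 :=
        natDegree_mul_le.trans (by simp)
      exact natDegree_mul_le.trans (by omega)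

theorem sign_epoly_pderPoly (x : ℝ) :
    Real.sign (epoly h (pderPoly h F) x) = Real.sign (epoly h (FtildeE h F) x) := by
  simp only [pderPoly]
  split_ifs with h0
  · rw [h0]
  · rfl
  · conv_rhs => rw [← X_pow_natTrailingDegree_mul_divX_iterate (FtildeE h F)]
    rw [epoly_mul, epoly_X_pow, Real.sign_mul_of_pos (pow_pos (Real.exp_pos _) _)]

theorem natDegree_pderPoly_lex_lt (hF : FtildeE h F ≠ 0) :
    (pderPoly h F).natDegree < F.natDegree ∨
      (pderPoly h F).natDegree = F.natDegree ∧
        ((pderPoly h F).coeff 0).natDegree < (F.coeff 0).natDegree := by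
  simp only [pderPoly, if_neg hF]
  split_ifs with hF0
  · rw [coeff_zero_FtildeE]
    exact (natDegree_FtildeE_le h F).lt_or_eq.imp_right
      fun heq => ⟨heq, natDegree_derivative_lt hF0.ne'⟩
  · -- `F(X,0)` is constant, so `Y ∣ F̃` and dividing out `Y^k`, `k ≥ 1`, lowers `deg_Y`.
    left
    have ht : 1 ≤ (FtildeE h F).natTrailingDegree := le_natTrailingDegree hF fun m hm => by
      rw [Nat.lt_one_iff.1 hm, coeff_zero_FtildeE,
        eq_C_of_natDegree_eq_zero (Nat.le_zero.1 (not_lt.1 hF0)), derivative_C]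
    have hdec := X_pow_natTrailingDegree_mul_divX_iterate (FtildeE h F)
    have hG : divX^[(FtildeE h F).natTrailingDegree] (FtildeE h F) ≠ 0 := fun hG0 =>
      hF (by rw [← hdec, hG0, mul_zero])
    have hdeg := natDegree_FtildeE_le h F
    rw [← hdec, natDegree_X_pow_mul _ hG] at hdeg
    omega

end PseudoDerivative

section SignConditions

variable {h : ℤ[X]} {s : ℕ} {F : Fin s → ℤ[X][X]}

theorem sign_epoly_eq_of_mem_Icc (hclosed : ∀ i, ∃ j, pderPoly h (F i) = F j) {a b : ℝ}
    (hab : ∀ i, Real.sign (epoly h (F i) a) = Real.sign (epoly h (F i) b)) (i : Fin s)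
    {x : ℝ} (hx : x ∈ Icc a b) : Real.sign (epoly h (F i) x) = Real.sign (epoly h (F i) a) := by
  obtain ⟨σ, hσ⟩ : ∃ σ, ∀ y ∈ Icc a b, Real.sign (epoly h (FtildeE h (F i)) y) = σ := by
    by_cases hF : FtildeE h (F i) = 0
    · exact ⟨0, fun y _ => by rw [hF, epoly_zero, Real.sign_zero]⟩
    · obtain ⟨j, hj⟩ := hclosed i
      have hlex := natDegree_pderPoly_lex_lt h (F i) hF
      refine ⟨Real.sign (epoly h (F j) a), fun y hy => ?_⟩
      rw [← sign_epoly_pderPoly, hj]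
      exact sign_epoly_eq_of_mem_Icc hclosed hab j hy
  exact Real.sign_eq_of_monotoneOn_or_antitoneOn
    (monotoneOn_or_antitoneOn_of_sign_deriv_eq (convex_Icc a b) (hasDerivAt_epoly h (F i))
      fun y hy => hσ y (interior_subset hy)) (hab i) hx
termination_by ((F i).natDegree, ((F i).coeff 0).natDegree)
decreasing_by
  rw [hj] at hlex
  exact Prod.lex_def.2 hlex

theorem ordConnected_setOf_sign_epoly_eq (hclosed : ∀ i, ∃ j, pderPoly h (F i) = F j)
    (ε : Fin s → ℝ) : OrdConnected {x : ℝ | ∀ i, Real.sign (epoly h (F i) x) = ε i} :=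
  ⟨fun _ ha _ hb _ hx i =>
    (sign_epoly_eq_of_mem_Icc hclosed (fun j => (ha j).trans (hb j).symm) i hx).trans (ha i)⟩

theorem isOpen_setOf_sign_epoly_eq (hclosed : ∀ i, ∃ j, pderPoly h (F i) = F j)
    (ε : Fin s → ℝ) (hA : {x : ℝ | ∀ i, Real.sign (epoly h (F i) x) = ε i}.Nontrivial) :
    IsOpen {x : ℝ | ∀ i, Real.sign (epoly h (F i) x) = ε i} := by
  obtain ⟨a, ha, b, hb, hab⟩ := hA.exists_lt
  have hIcc := (ordConnected_setOf_sign_epoly_eq hclosed ε).out ha hb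
  rw [ofPred_forall]
  refine isOpen_iInter_of_finite fun i => ?_
  by_cases hε : ε i = 0
  · have hzero : epoly h (F i) = 0 := eq_zero_of_eqOn_Icc_zero (analyticAt_epoly h (F i)) hab
      fun y hy => Real.sign_eq_zero_iff.1 ((hIcc hy i).trans hε)
    simp [hzero, hε]
  · exact isOpen_setOf_sign_eq (continuous_epoly h (F i)) hε

end SignConditions

theorem sign_condition_set_interval_general (h : Polynomial ℤ) (s : ℕ)
    (F : Fin s → Polynomial (Polynomial ℤ))
    (hclosed : ∀ i, ∃ j, pderPoly h (F i) = F j)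
    (ε : Fin s → ℝ) :
    {x : ℝ | ∀ i, Real.sign (epoly h (F i) x) = ε i} = ∅ ∨
    (∃ p : ℝ, {x : ℝ | ∀ i, Real.sign (epoly h (F i) x) = ε i} = {p}) ∨
    (IsOpen {x : ℝ | ∀ i, Real.sign (epoly h (F i) x) = ε i} ∧
      Set.OrdConnected {x : ℝ | ∀ i, Real.sign (epoly h (F i) x) = ε i} ∧
      Set.Nonempty {x : ℝ | ∀ i, Real.sign (epoly h (F i) x) = ε i}) := by
  rcases eq_empty_or_nonempty {x : ℝ | ∀ i, Real.sign (epoly h (F i) x) = ε i} with hA | hA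
  · exact Or.inl hA
  rcases hA.exists_eq_singleton_or_nontrivial with hpoint | hA'
  · exact Or.inr (Or.inl hpoint)
  · exact Or.inr (Or.inr ⟨isOpen_setOf_sign_epoly_eq hclosed ε hA',
      ordConnected_setOf_sign_epoly_eq hclosed ε, hA⟩)

theorem sign_condition_set_interval (h : Polynomial ℤ) (hh : 0 < h.natDegree) (s : ℕ)
    (F : Fin s → Polynomial (Polynomial ℤ))
    (hclosed : ∀ i, ∃ j, pderPoly h (F i) = F j)
    (ε : Fin s → ℝ) (hε : ∀ i, ε i = -1 ∨ ε i = 0 ∨ ε i = 1) :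
    {x : ℝ | ∀ i, Real.sign (epoly h (F i) x) = ε i} = ∅ ∨
    (∃ p : ℝ, {x : ℝ | ∀ i, Real.sign (epoly h (F i) x) = ε i} = {p}) ∨
    (IsOpen {x : ℝ | ∀ i, Real.sign (epoly h (F i) x) = ε i} ∧
      Set.OrdConnected {x : ℝ | ∀ i, Real.sign (epoly h (F i) x) = ε i} ∧
      Set.Nonempty {x : ℝ | ∀ i, Real.sign (epoly h (F i) x) = ε i}) :=
  sign_condition_set_interval_general h s F hclosed ε

end
end
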